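/- Let R be a ring whose regular elements C form a left Ore set with Q = C^{-1}R left Noetherian. Then the map p ↦ C^{-1}p gives a bijection between the set of minimal prime ideals of R and the set of minimal prime ideals of Q, with inverse q ↦ q ∩ R. -/

import Mathlib

/-!
An ideal of `Q = C⁻¹R` is determined by its contraction to `R`, so it suffices that contraction
maps primes to primes and that every prime of `R` contains the contraction of a prime of `Q`.
The first uses Noetherianity of `Q` to upgrade stability of a left ideal under right
multiplication by each `φ c` to stability under `(φ c)⁻¹`, hence under all of `Q`; for the second,
an ideal of `Q` maximal with contraction inside the given prime is itself prime.
-/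

/-- A (two-sided) prime ideal of a possibly noncommutative ring: a proper two-sided
ideal `P` such that `a R b ⊆ P` implies `a ∈ P` or `b ∈ P`. -/
def IsPrimeTwoSided {R : Type*} [Ring R] (P : Ideal R) : Prop :=
  (∀ a ∈ P, ∀ r : R, a * r ∈ P) ∧ P ≠ ⊤ ∧
    ∀ a b : R, (∀ r : R, a * r * b ∈ P) → a ∈ P ∨ b ∈ P

/-- The prime radical (intersection of all two-sided prime ideals) of a ring. -/
def primeRadical (R : Type*) [Ring R] : Ideal R :=
  sInf {P : Ideal R | IsPrimeTwoSided P}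

/-- An ideal `n` is nilpotent if, for some `k ≥ 1`, every product of `k` elements of
`n` vanishes. -/
def IdealIsNilpotent {R : Type*} [Ring R] (n : Ideal R) : Prop :=
  ∃ k : ℕ, 0 < k ∧ ∀ l : List R, (∀ x ∈ l, x ∈ n) → l.length = k → l.prod = 0

/-- `P` is a minimal (two-sided) prime ideal of the ring `R`. -/
def IsMinimalPrimeTwoSided {R : Type*} [Ring R] (P : Ideal R) : Prop :=
  IsPrimeTwoSided P ∧ ∀ P' : Ideal R, IsPrimeTwoSided P' → P' ≤ P → P' = P

open Submodule

namespace IsPrimeTwoSided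

variable {A : Type*} [Ring A]

theorem sInf_of_isChain {S : Set (Ideal A)} (hS : IsChain (· ≤ ·) S) (hne : S.Nonempty)
    (hprime : ∀ P ∈ S, IsPrimeTwoSided P) : IsPrimeTwoSided (sInf S) := by
  obtain ⟨P₀, hP₀⟩ := hne
  refine ⟨fun a ha r => mem_sInf.2 fun P hP => (hprime P hP).1 a (mem_sInf.1 ha P hP) r,
    ne_top_of_le_ne_top (hprime P₀ hP₀).2.1 (sInf_le hP₀), fun a b hab => ?_⟩
  by_contra! hnot
  obtain ⟨⟨P, hP, haP⟩, ⟨P', hP', hbP'⟩⟩ : (∃ P ∈ S, a ∉ P) ∧ ∃ P ∈ S, b ∉ P := by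
    simpa only [mem_sInf, not_forall, exists_prop] using hnot
  obtain ⟨M, hM, haM, hbM⟩ : ∃ M ∈ S, a ∉ M ∧ b ∉ M := by
    rcases hS.total hP hP' with hle | hle
    · exact ⟨P, hP, haP, fun hb => hbP' (hle hb)⟩
    · exact ⟨P', hP', fun ha => haP (hle ha), hbP'⟩
  rcases (hprime M hM).2.2 a b fun r => mem_sInf.1 (hab r) M hM with h | h
  exacts [haM h, hbM h]

theorem exists_isMinimalPrimeTwoSided_le {P : Ideal A} (hP : IsPrimeTwoSided P) :
    ∃ P₀ : Ideal A, IsMinimalPrimeTwoSided P₀ ∧ P₀ ≤ P := by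
  obtain ⟨m, hPm, hm⟩ := zorn_le_nonempty₀ {I : (Ideal A)ᵒᵈ | IsPrimeTwoSided I.ofDual}
    (fun c hc hchain y hy =>
      ⟨OrderDual.toDual (sInf (OrderDual.toDual ⁻¹' c)),
        sInf_of_isChain (fun _ hI _ hJ hIJ => (hchain hI hJ hIJ).symm) ⟨_, hy⟩ fun _ hI => hc hI,
        fun _ hI => sInf_le (show _ ∈ OrderDual.toDual ⁻¹' c from hI)⟩)
    (OrderDual.toDual P) hP
  exact ⟨m.ofDual, ⟨hm.1, fun P' hP' hle => le_antisymm hle (hm.2 hP' hle)⟩, hPm⟩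

end IsPrimeTwoSided

namespace Ideal

variable {A : Type*} [Ring A]

def rightColon (I : Ideal A) (a : A) : Ideal A where
  carrier := {w | ∀ q, a * q * w ∈ I}
  add_mem' hv hw q := by simpa only [mul_add] using I.add_mem (hv q) (hw q)
  zero_mem' q := by simp
  smul_mem' s w hw q := by simpa only [smul_eq_mul, ← mul_assoc] using hw (q * s)

theorem mem_rightColon {I : Ideal A} {a w : A} : w ∈ I.rightColon a ↔ ∀ q, a * q * w ∈ I :=
  Iff.rfl

theorem le_rightColon (I : Ideal A) (a : A) : I ≤ I.rightColon a :=
  fun _ hw _ => I.mul_mem_left _ hw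

instance (I : Ideal A) [I.IsTwoSided] (a : A) : (I.rightColon a).IsTwoSided :=
  ⟨fun s hw q => by simpa only [← mul_assoc] using I.mul_mem_right s (hw q)⟩

-- Orzech: right multiplication by `u` induces a surjective endomorphism of `A ⧸ J`,
-- which is therefore injective.
theorem mem_of_mul_unit_mem [IsNoetherianRing A] {J : Ideal A} {u : Aˣ} {x : A}
    (hJ : ∀ y ∈ J, y * u ∈ J) (hx : x * u ∈ J) : x ∈ J := by
  let g : (A ⧸ J) →ₗ[A] A ⧸ J := J.mapQ J (LinearMap.toSpanSingleton A A ↑u) hJ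
  have hg : Function.Surjective g := (Submodule.Quotient.mk_surjective J).forall.2 fun y =>
    ⟨Submodule.Quotient.mk (y * ↑u⁻¹), congrArg Submodule.Quotient.mk (u.inv_mul_cancel_right y)⟩
  have hgx : g (Submodule.Quotient.mk x) = g 0 := by
    rw [map_zero]
    exact (Submodule.Quotient.mk_eq_zero J).2 hx
  exact (Submodule.Quotient.mk_eq_zero J).1
    (IsNoetherian.injective_of_surjective_endomorphism g hg hgx)

end Ideal

section Localization

variable {R Q : Type*} [Ring R] [Ring Q] {φ : R →+* Q}

theorem Ideal.mem_iff_exists_mul_mem_comap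
    (hunit : ∀ c : R, IsRegular c → IsUnit (φ c))
    (hfrac : ∀ q : Q, ∃ c r : R, IsRegular c ∧ φ c * q = φ r) (P : Ideal Q) (q : Q) :
    q ∈ P ↔ ∃ c a : R, IsRegular c ∧ a ∈ P.comap φ ∧ φ c * q = φ a := by
  refine ⟨fun hq => ?_, fun ⟨c, a, hc, ha, hca⟩ => ?_⟩
  · obtain ⟨c, r, hc, hcr⟩ := hfrac q
    exact ⟨c, r, hc, by simpa only [mem_comap, ← hcr] using P.mul_mem_left (φ c) hq, hcr⟩
  · obtain ⟨u, hu⟩ := hunit c hc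
    simpa only [← hca, ← hu, Units.inv_mul_cancel_left] using P.mul_mem_left (↑u⁻¹) ha

theorem Ideal.le_of_comap_le_comap (hunit : ∀ c : R, IsRegular c → IsUnit (φ c))
    (hfrac : ∀ q : Q, ∃ c r : R, IsRegular c ∧ φ c * q = φ r) {P P' : Ideal Q}
    (h : P.comap φ ≤ P'.comap φ) : P ≤ P' := fun q hq => by
  obtain ⟨c, a, hc, ha, hca⟩ := (mem_iff_exists_mul_mem_comap hunit hfrac P q).1 hq
  exact (mem_iff_exists_mul_mem_comap hunit hfrac P' q).2 ⟨c, a, hc, h ha, hca⟩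

theorem Ideal.isTwoSided_of_mul_map_mem [IsNoetherianRing Q]
    (hunit : ∀ c : R, IsRegular c → IsUnit (φ c))
    (hfrac : ∀ q : Q, ∃ c r : R, IsRegular c ∧ φ c * q = φ r) {K : Ideal Q}
    (hK : ∀ x ∈ K, ∀ r : R, x * φ r ∈ K) : K.IsTwoSided := by
  refine ⟨fun {x} q hx => ?_⟩
  obtain ⟨c, r, hc, hcq⟩ := hfrac q
  obtain ⟨u, hu⟩ := hunit c hc
  have hq : q = ↑u⁻¹ * φ r := by rw [← hcq, ← hu, Units.inv_mul_cancel_left]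
  have hxu : x * ↑u⁻¹ ∈ K :=
    mem_of_mul_unit_mem (u := u) (fun y hy => hu ▸ hK y hy c) (by simpa using hx)
  simpa only [hq, ← mul_assoc] using hK _ hxu r

theorem IsPrimeTwoSided.comap [IsNoetherianRing Q] (hunit : ∀ c : R, IsRegular c → IsUnit (φ c))
    (hfrac : ∀ q : Q, ∃ c r : R, IsRegular c ∧ φ c * q = φ r) {P : Ideal Q}
    (hP : IsPrimeTwoSided P) : IsPrimeTwoSided (P.comap φ) := by
  refine ⟨fun a ha r => by simpa using hP.1 _ ha (φ r), fun htop => hP.2.1 ?_, fun x y hxy => ?_⟩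
  · simpa [Ideal.eq_top_iff_one] using htop
  let K : Ideal Q := P.colon (Set.range fun r => φ (r * y))
  have hK : ∀ w ∈ K, ∀ r : R, w * φ r ∈ K := by
    refine fun w hw r => mem_colon.2 ?_
    rintro _ ⟨s, rfl⟩
    simpa [mul_assoc] using mem_colon.1 hw _ ⟨r * s, rfl⟩
  have hxK : φ x ∈ K := by
    refine mem_colon.2 ?_
    rintro _ ⟨r, rfl⟩
    simpa [mul_assoc] using hxy r
  have := Ideal.isTwoSided_of_mul_map_mem hunit hfrac hK
  refine hP.2.2 (φ x) (φ y) fun q => ?_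
  simpa using mem_colon.1 (K.mul_mem_right q hxK) _ ⟨1, rfl⟩

-- From `a Q b ⊆ I` with `a, b ∉ I`, enlarging `I` to two colon ideals in turn produces
-- `x, y ∉ p` with `x R y ⊆ φ⁻¹ I ⊆ p`.
theorem isPrimeTwoSided_of_maximal_comap_le (φ : R →+* Q) {p : Ideal R}
    (hp : IsPrimeTwoSided p) {I : Ideal Q} [I.IsTwoSided] (hIp : I.comap φ ≤ p)
    (hmax : ∀ J : Ideal Q, J.IsTwoSided → I < J → ¬J.comap φ ≤ p) : IsPrimeTwoSided I := by
  have hgrow : ∀ J : Ideal Q, J.IsTwoSided → I ≤ J → ∀ z ∈ J, z ∉ I → ∃ x ∉ p, φ x ∈ J := by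
    intro J hJ hIJ z hzJ hzI
    by_contra! h
    exact hmax J hJ (lt_of_le_of_ne hIJ (by rintro rfl; exact hzI hzJ))
      fun x hx => by_contra fun hxp => h x hxp hx
  refine ⟨fun a ha r => I.mul_mem_right r ha, fun htop => ?_, fun a b hab => ?_⟩
  · rw [htop, Ideal.comap_top] at hIp
    exact hp.2.1 (top_le_iff.1 hIp)
  by_contra! hab'
  have haJ : a ∈ I.colon (span Q {b} : Set Q) := by
    refine mem_colon.2 fun s hs => ?_
    obtain ⟨q, rfl⟩ := mem_span_singleton.1 hs
    simpa only [smul_eq_mul, ← mul_assoc] using hab q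
  obtain ⟨x, hxp, hx⟩ := hgrow _ inferInstance Ideal.le_colon a haJ hab'.1
  have hbJ : b ∈ I.rightColon (φ x) := Ideal.mem_rightColon.2 fun q => by
    simpa only [smul_eq_mul, ← mul_assoc] using
      mem_colon.1 hx _ (mem_span_singleton.2 ⟨q, rfl⟩)
  obtain ⟨y, hyp, hy⟩ := hgrow _ inferInstance (I.le_rightColon _) b hbJ hab'.2
  rcases hp.2.2 x y fun r => hIp (by simpa using Ideal.mem_rightColon.1 hy (φ r)) with h | h
  exacts [hxp h, hyp h]

theorem exists_isPrimeTwoSided_comap_le [IsNoetherianRing Q] (hinj : Function.Injective φ)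
    {p : Ideal R} (hp : IsPrimeTwoSided p) :
    ∃ P : Ideal Q, IsPrimeTwoSided P ∧ P.comap φ ≤ p := by
  obtain ⟨I, ⟨hI, hIp⟩, hmax⟩ := set_has_maximal_iff_noetherian.2 ‹_›
    {I : Ideal Q | I.IsTwoSided ∧ I.comap φ ≤ p}
    ⟨⊥, inferInstance, Ideal.comap_bot_le_of_injective φ hinj⟩
  exact ⟨I, isPrimeTwoSided_of_maximal_comap_le φ hp hIp fun J hJ hlt hJp => hmax J ⟨hJ, hJp⟩ hlt,
    hIp⟩

theorem exists_isMinimalPrimeTwoSided_comap_eq [IsNoetherianRing Q]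
    (hinj : Function.Injective φ) (hunit : ∀ c : R, IsRegular c → IsUnit (φ c))
    (hfrac : ∀ q : Q, ∃ c r : R, IsRegular c ∧ φ c * q = φ r) {p : Ideal R}
    (hp : IsMinimalPrimeTwoSided p) :
    ∃ P : Ideal Q, IsMinimalPrimeTwoSided P ∧ P.comap φ = p := by
  obtain ⟨P', hP', hP'p⟩ := exists_isPrimeTwoSided_comap_le hinj hp.1
  obtain ⟨P, hP, hPP'⟩ := hP'.exists_isMinimalPrimeTwoSided_le
  exact ⟨P, hP, hp.2 _ (hP.1.comap hunit hfrac) ((Ideal.comap_mono hPP').trans hP'p)⟩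

end Localization

theorem stmt19_general {R Q : Type*} [Ring R] [Ring Q]
    (φ : R →+* Q) (hinj : Function.Injective φ)
    (hunit : ∀ c : R, IsRegular c → IsUnit (φ c))
    (hfrac : ∀ q : Q, ∃ c r : R, IsRegular c ∧ φ c * q = φ r)
    [IsNoetherianRing Q] :
    (∀ p : Ideal R, IsMinimalPrimeTwoSided p →
      ∃ P : Ideal Q, IsMinimalPrimeTwoSided P ∧
        (∀ q : Q, q ∈ P ↔ ∃ c a : R, IsRegular c ∧ a ∈ p ∧ φ c * q = φ a) ∧
        Ideal.comap φ P = p) ∧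
    (∀ P : Ideal Q, IsMinimalPrimeTwoSided P →
      IsMinimalPrimeTwoSided (Ideal.comap φ P) ∧
        ∀ q : Q, q ∈ P ↔
          ∃ c a : R, IsRegular c ∧ a ∈ Ideal.comap φ P ∧ φ c * q = φ a) := by
  have hmem := Ideal.mem_iff_exists_mul_mem_comap hunit hfrac
  refine ⟨fun p hp => ?_, fun P hP => ⟨⟨hP.1.comap hunit hfrac, fun p hp hle => ?_⟩, hmem P⟩⟩
  · obtain ⟨P, hP, rfl⟩ := exists_isMinimalPrimeTwoSided_comap_eq hinj hunit hfrac hp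
    exact ⟨P, hP, hmem P, rfl⟩
  · obtain ⟨p₀, hp₀, hp₀p⟩ := hp.exists_isMinimalPrimeTwoSided_le
    obtain ⟨P₀, hP₀, rfl⟩ := exists_isMinimalPrimeTwoSided_comap_eq hinj hunit hfrac hp₀
    obtain rfl : P₀ = P :=
      hP.2 P₀ hP₀.1 (Ideal.le_of_comap_le_comap hunit hfrac (hp₀p.trans hle))
    exact le_antisymm hle hp₀p

/-- Let `R` be a ring whose regular elements `C` form a left Ore set
with `Q = C⁻¹R` left Noetherian. Then the map `p ↦ C⁻¹p` gives a bijection between the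
set of minimal prime ideals of `R` and the set of minimal prime ideals of `Q`, with
inverse `q ↦ q ∩ R`. Here `C⁻¹p = {(φ c)⁻¹ (φ a) | c ∈ C, a ∈ p}` and `q ∩ R` is the
preimage `Ideal.comap φ q`. -/
theorem stmt19 {R Q : Type*} [Ring R] [Ring Q]
    (hOre : ∀ (r c : R), IsRegular c → ∃ c' r' : R, IsRegular c' ∧ c' * r = r' * c)
    (φ : R →+* Q) (hinj : Function.Injective φ)
    (hunit : ∀ c : R, IsRegular c → IsUnit (φ c))
    (hfrac : ∀ q : Q, ∃ c r : R, IsRegular c ∧ φ c * q = φ r)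
    [IsNoetherianRing Q] :
    (∀ p : Ideal R, IsMinimalPrimeTwoSided p →
      ∃ P : Ideal Q, IsMinimalPrimeTwoSided P ∧
        (∀ q : Q, q ∈ P ↔ ∃ c a : R, IsRegular c ∧ a ∈ p ∧ φ c * q = φ a) ∧
        Ideal.comap φ P = p) ∧
    (∀ P : Ideal Q, IsMinimalPrimeTwoSided P →
      IsMinimalPrimeTwoSided (Ideal.comap φ P) ∧
        ∀ q : Q, q ∈ P ↔
          ∃ c a : R, IsRegular c ∧ a ∈ Ideal.comap φ P ∧ φ c * q = φ a) :=
  stmt19_general φ hinj hunit hfrac
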